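/- arXiv:2511.12506 — 4 statements merged into one kernel-verified Lean document; each statement's English description precedes it below -/
import Mathlib

section
/- Let δ ∈ (0, 1/3) and n ≥ 9/(2δ²). Let V1, V2, V3 be pairwise disjoint sets with |V_i| = x_i·n and x_i ≥ 1/3 − δ for each i ∈ [3]. Then ‖C[V1,V2,V3]‖₂ ≥ n⁴/6 − 2δ·n⁴. -/
/-- The cyclic 3-graph `C[V1,V2,V3]`: all triples of types
`V1V2V3`, `V1V1V2`, `V2V2V3`, `V3V3V1`. -/
def cycEdges {α : Type*} [Fintype α] [DecidableEq α] (V1 V2 V3 : Finset α) :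
    Finset (Finset α) :=
  (Finset.powersetCard 3 (Finset.univ : Finset α)).filter fun e =>
    ((e ∩ V1).card, (e ∩ V2).card, (e ∩ V3).card) ∈
      [((1 : ℕ), (1 : ℕ), (1 : ℕ)), (2, 1, 0), (0, 2, 1), (1, 0, 2)]

/-- The ℓ₂-norm of a 3-graph: the sum of squared codegrees over all pairs. -/
def normTwo {α : Type*} [Fintype α] [DecidableEq α] (H : Finset (Finset α)) : ℕ :=
  ∑ e ∈ Finset.powersetCard 2 (Finset.univ : Finset α), ((H.filter fun E => e ⊆ E).card) ^ 2

/-!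
A pair `{u, v}` with `u ∈ V1`, `v ∈ V2` lies in an edge with every vertex of `V3` and every vertex
of `V1 \ {u}`, so its codegree is at least `|V3| + |V1| - 1`; a pair inside `V1` lies in an edge
with every vertex of `V2`. The same holds cyclically. These six kinds of pairs are told apart by
how they meet `V1, V2, V3`, so their squared codegrees add up, and with all parts of size at least
`t = (1/3 - δ) n` the sum is at least `3 t² (2t - 1)² + 3 t (t - 1) t² / 2 ≥ 27/2 t⁴ - 27/2 t³`.
Now `27/2 t⁴ = n⁴/6 - 2δn⁴ + δ²n⁴ (9 - 18δ + 27δ²/2)`, and the `δ²n⁴` term absorbs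
`27/2 t³ ≤ n³/2` since `δ²n ≥ 9/2`. For `δ ≥ 1/12` the claimed bound is not positive.
-/

open Finset

lemma cross_term_ge {a b c t : ℝ} (ht : 1 / 2 ≤ t) (ha : t ≤ a) (hb : t ≤ b) (hc : t ≤ c) :
    t * t * (2 * t - 1) ^ 2 ≤ a * b * (c + (a - 1)) ^ 2 := by
  have hab : t * t ≤ a * b := mul_le_mul ha hb (by linarith) (by linarith)
  have hsq : (2 * t - 1) ^ 2 ≤ (c + (a - 1)) ^ 2 := by gcongr <;> linarith
  exact mul_le_mul hab hsq (sq_nonneg _) (mul_nonneg (by linarith) (by linarith))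

lemma inside_term_ge {a b t : ℝ} (ht : 1 ≤ t) (ha : t ≤ a) (hb : t ≤ b) :
    t * (t - 1) / 2 * t ^ 2 ≤ a * (a - 1) / 2 * b ^ 2 := by
  have haa : t * (t - 1) / 2 ≤ a * (a - 1) / 2 := by gcongr; linarith
  have hsq : t ^ 2 ≤ b ^ 2 := by gcongr
  exact mul_le_mul haa hsq (sq_nonneg _) (by nlinarith)

lemma cyc_lower_bound_ge {a b c t : ℝ} (ht : 1 ≤ t) (ha : t ≤ a) (hb : t ≤ b) (hc : t ≤ c) :
    27 / 2 * t ^ 4 - 27 / 2 * t ^ 3 ≤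
      a * b * (c + (a - 1)) ^ 2 + b * c * (a + (b - 1)) ^ 2 + c * a * (b + (c - 1)) ^ 2 +
        a * (a - 1) / 2 * b ^ 2 + b * (b - 1) / 2 * c ^ 2 + c * (c - 1) / 2 * a ^ 2 := by
  have ht' : 1 / 2 ≤ t := by linarith
  have hdiag : 3 * (t * t * (2 * t - 1) ^ 2) + 3 * (t * (t - 1) / 2 * t ^ 2) =
      27 / 2 * t ^ 4 - 27 / 2 * t ^ 3 + 3 * t ^ 2 := by ring
  linarith [sq_nonneg t, cross_term_ge ht' ha hb hc, cross_term_ge ht' hb hc ha,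
    cross_term_ge ht' hc ha hb, inside_term_ge ht ha hb, inside_term_ge ht hb hc,
    inside_term_ge ht hc ha]

lemma quartic_estimate {δ n : ℝ} (hδ0 : 0 < δ) (hδ : δ < 1 / 3) (hn : 9 / 2 ≤ δ ^ 2 * n) :
    n ^ 4 / 6 - 2 * δ * n ^ 4 ≤
      27 / 2 * ((1 / 3 - δ) * n) ^ 4 - 27 / 2 * ((1 / 3 - δ) * n) ^ 3 := by
  have hn0 : 0 ≤ n := by nlinarith [sq_nonneg δ]
  have hcube : ((1 / 3 - δ) * n) ^ 3 ≤ (n / 3) ^ 3 := by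
    gcongr
    nlinarith
  have hexpand : 27 / 2 * ((1 / 3 - δ) * n) ^ 4 - (n ^ 4 / 6 - 2 * δ * n ^ 4) =
      δ ^ 2 * n ^ 4 * (9 - 18 * δ + 27 / 2 * δ ^ 2) := by ring
  have hfactor : 3 ≤ 9 - 18 * δ + 27 / 2 * δ ^ 2 := by nlinarith [sq_nonneg δ]
  nlinarith [mul_le_mul_of_nonneg_right hn (pow_nonneg hn0 3), mul_le_mul_of_nonneg_left hfactor
    (mul_nonneg (sq_nonneg δ) (pow_nonneg hn0 4))]

section Codegree

variable {α : Type*} [DecidableEq α]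

def partProfile (V1 V2 V3 e : Finset α) : ℕ × ℕ × ℕ :=
  (#(e ∩ V1), #(e ∩ V2), #(e ∩ V3))

def codegree (H : Finset (Finset α)) (e : Finset α) : ℕ :=
  #{E ∈ H | e ⊆ E}

lemma card_le_codegree {H : Finset (Finset α)} {e W : Finset α} (hW : Disjoint W e)
    (hH : ∀ w ∈ W, insert w e ∈ H) : #W ≤ codegree H e :=
  card_le_card_of_injOn (insert · e) (fun w hw => mem_filter.2 ⟨hH w hw, subset_insert w e⟩)
    fun _ hw _ _ h => (insert_inj (disjoint_left.1 hW hw)).1 h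

lemma filter_partProfile_rotate (s : Finset (Finset α)) (V1 V2 V3 : Finset α) (a b c : ℕ) :
    {e ∈ s | partProfile V2 V3 V1 e = (a, b, c)} =
      {e ∈ s | partProfile V1 V2 V3 e = (c, a, b)} := by
  ext e
  simp only [mem_filter, partProfile, Prod.mk.injEq]
  tauto

variable [Fintype α]

lemma normTwo_eq_sum_codegree (H : Finset (Finset α)) :
    normTwo H = ∑ e ∈ powersetCard 2 univ, codegree H e ^ 2 := rfl

lemma mem_cycEdges {V1 V2 V3 e : Finset α} :
    e ∈ cycEdges V1 V2 V3 ↔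
      #e = 3 ∧ partProfile V1 V2 V3 e ∈ [(1, 1, 1), (2, 1, 0), (0, 2, 1), (1, 0, 2)] := by
  simp [cycEdges, partProfile]

lemma cycEdges_rotate (V1 V2 V3 : Finset α) : cycEdges V2 V3 V1 = cycEdges V1 V2 V3 := by
  ext e
  simp only [mem_cycEdges, partProfile, List.mem_cons, Prod.mk.injEq, List.not_mem_nil, or_false]
  tauto

variable {V1 V2 V3 : Finset α}

lemma codegree_cycEdges_pair_ge (h12 : Disjoint V1 V2) (h13 : Disjoint V1 V3)
    (h23 : Disjoint V2 V3) {u v : α} (hu : u ∈ V1) (hv : v ∈ V2) :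
    #V3 + (#V1 - 1) ≤ codegree (cycEdges V1 V2 V3) {u, v} := by
  have hvV1 : v ∉ V1 := disjoint_right.1 h12 hv
  have huV2 : u ∉ V2 := disjoint_left.1 h12 hu
  have huV3 : u ∉ V3 := disjoint_left.1 h13 hu
  have hvV3 : v ∉ V3 := disjoint_left.1 h23 hv
  have huv : u ∉ ({v} : Finset α) := by rintro h; exact hvV1 (mem_singleton.1 h ▸ hu)
  have hW : ∀ w ∈ V3 ∪ V1.erase u, w ∉ ({u, v} : Finset α) := by
    intro w hw hwuv
    simp only [mem_union, mem_erase, mem_insert, mem_singleton] at hw hwuv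
    rcases hwuv with rfl | rfl <;> tauto
  calc #V3 + (#V1 - 1) = #(V3 ∪ V1.erase u) := by
        rw [card_union_of_disjoint ((h13.mono_left (erase_subset u V1)).symm),
          card_erase_of_mem hu]
    _ ≤ _ := by
      refine card_le_codegree (disjoint_left.2 hW) fun w hw => ?_
      rw [mem_cycEdges, card_insert_of_notMem (hW w hw), card_insert_of_notMem huv,
        card_singleton]
      refine ⟨rfl, ?_⟩
      rcases mem_union.1 hw with hw3 | hw1
      · simp [partProfile, hu, hv, hvV1, huV2, huV3, hvV3, hw3, disjoint_right.1 h13 hw3,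
          disjoint_right.1 h23 hw3]
      · obtain ⟨hwu, hw1⟩ := mem_erase.1 hw1
        simp [partProfile, hu, hv, hvV1, huV2, huV3, hvV3, hw1, disjoint_left.1 h12 hw1,
          disjoint_left.1 h13 hw1, card_pair hwu]

lemma codegree_cycEdges_ge_of_subset (h12 : Disjoint V1 V2) (h13 : Disjoint V1 V3)
    (h23 : Disjoint V2 V3) {e : Finset α} (he : e ⊆ V1) (he2 : #e = 2) :
    #V2 ≤ codegree (cycEdges V1 V2 V3) e := by
  have hW : Disjoint V2 e := h12.symm.mono_right he
  refine card_le_codegree hW fun w hw => ?_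
  have hwe : w ∉ e := disjoint_left.1 hW hw
  rw [mem_cycEdges, card_insert_of_notMem hwe, he2]
  refine ⟨rfl, ?_⟩
  simp [partProfile, inter_eq_left.2 he, he2,
    disjoint_iff_inter_eq_empty.1 (h12.mono_left he),
    disjoint_iff_inter_eq_empty.1 (h13.mono_left he), hw, disjoint_right.1 h12 hw,
    disjoint_left.1 h23 hw]

lemma sum_codegree_sq_cross_ge (h12 : Disjoint V1 V2) (h13 : Disjoint V1 V3)
    (h23 : Disjoint V2 V3) :
    #V1 * #V2 * (#V3 + (#V1 - 1)) ^ 2 ≤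
      ∑ e ∈ powersetCard 2 univ with partProfile V1 V2 V3 e = (1, 1, 0),
        codegree (cycEdges V1 V2 V3) e ^ 2 := by
  have hinj : Set.InjOn (fun p : α × α => ({p.1, p.2} : Finset α)) ↑(V1 ×ˢ V2) := by
    rintro ⟨a, b⟩ hab ⟨c, d⟩ hcd h
    simp only [coe_product, Set.mem_prod, mem_coe] at hab hcd
    have h1 := congrArg (· ∩ V1) h
    have h2 := congrArg (· ∩ V2) h
    simp only at h1 h2
    simp [hab.1, hab.2, hcd.1, hcd.2, disjoint_left.1 h12 hab.1, disjoint_left.1 h12 hcd.1,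
      disjoint_right.1 h12 hab.2, disjoint_right.1 h12 hcd.2] at h1 h2
    simp [h1, h2]
  calc #V1 * #V2 * (#V3 + (#V1 - 1)) ^ 2 = ∑ p ∈ V1 ×ˢ V2, (#V3 + (#V1 - 1)) ^ 2 := by
        rw [sum_const, card_product, smul_eq_mul]
    _ ≤ ∑ p ∈ V1 ×ˢ V2, codegree (cycEdges V1 V2 V3) {p.1, p.2} ^ 2 := by
        refine sum_le_sum fun p hp => ?_
        gcongr
        exact codegree_cycEdges_pair_ge h12 h13 h23 (mem_product.1 hp).1 (mem_product.1 hp).2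
    _ = ∑ e ∈ (V1 ×ˢ V2).image fun p => {p.1, p.2}, codegree (cycEdges V1 V2 V3) e ^ 2 :=
        (sum_image (f := fun e => codegree (cycEdges V1 V2 V3) e ^ 2) hinj).symm
    _ ≤ _ := by
        refine sum_le_sum_of_subset (image_subset_iff.2 fun p hp => ?_)
        obtain ⟨hu, hv⟩ := mem_product.1 hp
        have huv : p.1 ≠ p.2 := fun h => disjoint_left.1 h12 hu (h ▸ hv)
        simp [partProfile, card_pair huv, hu, hv, disjoint_left.1 h12 hu, disjoint_left.1 h13 hu,
          disjoint_right.1 h12 hv, disjoint_left.1 h23 hv]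

lemma sum_codegree_sq_inside_ge (h12 : Disjoint V1 V2) (h13 : Disjoint V1 V3)
    (h23 : Disjoint V2 V3) :
    (#V1).choose 2 * #V2 ^ 2 ≤
      ∑ e ∈ powersetCard 2 univ with partProfile V1 V2 V3 e = (2, 0, 0),
        codegree (cycEdges V1 V2 V3) e ^ 2 := by
  calc (#V1).choose 2 * #V2 ^ 2 = ∑ e ∈ powersetCard 2 V1, #V2 ^ 2 := by
        rw [sum_const, card_powersetCard, smul_eq_mul]
    _ ≤ ∑ e ∈ powersetCard 2 V1, codegree (cycEdges V1 V2 V3) e ^ 2 := by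
        refine sum_le_sum fun e he => ?_
        obtain ⟨he1, he2⟩ := mem_powersetCard.1 he
        gcongr
        exact codegree_cycEdges_ge_of_subset h12 h13 h23 he1 he2
    _ ≤ _ := by
        refine sum_le_sum_of_subset fun e he => ?_
        obtain ⟨he1, he2⟩ := mem_powersetCard.1 he
        simp [partProfile, he2, inter_eq_left.2 he1,
          disjoint_iff_inter_eq_empty.1 (h12.mono_left he1),
          disjoint_iff_inter_eq_empty.1 (h13.mono_left he1)]

theorem normTwo_cycEdges_ge (h12 : Disjoint V1 V2) (h13 : Disjoint V1 V3)
    (h23 : Disjoint V2 V3) :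
    #V1 * #V2 * (#V3 + (#V1 - 1)) ^ 2 + #V2 * #V3 * (#V1 + (#V2 - 1)) ^ 2 +
        #V3 * #V1 * (#V2 + (#V3 - 1)) ^ 2 + (#V1).choose 2 * #V2 ^ 2 +
        (#V2).choose 2 * #V3 ^ 2 + (#V3).choose 2 * #V1 ^ 2 ≤
      normTwo (cycEdges V1 V2 V3) := by
  have hrot : cycEdges V3 V1 V2 = cycEdges V1 V2 V3 := by
    rw [cycEdges_rotate, cycEdges_rotate]
  have cross1 := sum_codegree_sq_cross_ge h12 h13 h23
  have cross2 := sum_codegree_sq_cross_ge h23 h12.symm h13.symm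
  have cross3 := sum_codegree_sq_cross_ge h13.symm h23.symm h12
  have inside1 := sum_codegree_sq_inside_ge h12 h13 h23
  have inside2 := sum_codegree_sq_inside_ge h23 h12.symm h13.symm
  have inside3 := sum_codegree_sq_inside_ge h13.symm h23.symm h12
  rw [cycEdges_rotate, filter_partProfile_rotate] at cross2 inside2
  rw [hrot, filter_partProfile_rotate, filter_partProfile_rotate] at cross3 inside3
  rw [normTwo_eq_sum_codegree]
  -- pairs of different profiles lie in different fibres, so the six bounds add up
  refine le_trans ?_ (sum_fiberwise_le_sum_of_sum_fiber_nonneg (g := partProfile V1 V2 V3)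
    (t := {(1, 1, 0), (0, 1, 1), (1, 0, 1), (2, 0, 0), (0, 2, 0), (0, 0, 2)})
    fun _ _ => Nat.zero_le _)
  rw [sum_insert (by decide), sum_insert (by decide), sum_insert (by decide),
    sum_insert (by decide), sum_insert (by decide), sum_singleton]
  omega

theorem normTwo_cycEdges_ge_of_card_ge (h12 : Disjoint V1 V2) (h13 : Disjoint V1 V3)
    (h23 : Disjoint V2 V3) {t : ℝ} (ht : 1 ≤ t) (h1 : t ≤ #V1) (h2 : t ≤ #V2) (h3 : t ≤ #V3) :
    27 / 2 * t ^ 4 - 27 / 2 * t ^ 3 ≤ normTwo (cycEdges V1 V2 V3) := by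
  have hV1 : 1 ≤ #V1 := by exact_mod_cast ht.trans h1
  have hV2 : 1 ≤ #V2 := by exact_mod_cast ht.trans h2
  have hV3 : 1 ≤ #V3 := by exact_mod_cast ht.trans h3
  have key := (Nat.cast_le (α := ℝ)).2 (normTwo_cycEdges_ge h12 h13 h23)
  push_cast [Nat.cast_sub hV1, Nat.cast_sub hV2, Nat.cast_sub hV3, Nat.cast_choose_two] at key
  exact (cyc_lower_bound_ge ht h1 h2 h3).trans key

end Codegree

theorem stmt_6 {α : Type*} [Fintype α] [DecidableEq α] (n : ℕ) (δ x1 x2 x3 : ℝ)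
    (hδ0 : 0 < δ) (hδ : δ < 1 / 3) (hn : 9 / (2 * δ ^ 2) ≤ (n : ℝ))
    (V1 V2 V3 : Finset α)
    (h12 : Disjoint V1 V2) (h13 : Disjoint V1 V3) (h23 : Disjoint V2 V3)
    (c1 : (V1.card : ℝ) = x1 * n) (c2 : (V2.card : ℝ) = x2 * n)
    (c3 : (V3.card : ℝ) = x3 * n)
    (hx1 : 1 / 3 - δ ≤ x1) (hx2 : 1 / 3 - δ ≤ x2) (hx3 : 1 / 3 - δ ≤ x3) :
    (normTwo (cycEdges V1 V2 V3) : ℝ) ≥ (n : ℝ) ^ 4 / 6 - 2 * δ * (n : ℝ) ^ 4 := by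
  have hn0 : (0 : ℝ) ≤ n := n.cast_nonneg
  rcases le_or_gt (1 / 12) δ with hδ12 | hδ12
  · have hneg : (n : ℝ) ^ 4 / 6 - 2 * δ * n ^ 4 ≤ 0 := by nlinarith [pow_nonneg hn0 4]
    exact hneg.trans (Nat.cast_nonneg _)
  have hδn : 9 / 2 ≤ δ ^ 2 * n := by
    rw [div_le_iff₀ (by positivity)] at hn
    linarith
  have hn648 : 648 < (n : ℝ) := by nlinarith
  have ht : 1 ≤ (1 / 3 - δ) * n := by nlinarith
  have hcard {V : Finset α} {x : ℝ} (hV : (#V : ℝ) = x * n) (hx : 1 / 3 - δ ≤ x) :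
      (1 / 3 - δ) * n ≤ #V :=
    hV ▸ mul_le_mul_of_nonneg_right hx hn0
  exact (quartic_estimate hδ0 hδ hδn).trans <| normTwo_cycEdges_ge_of_card_ge h12 h13 h23 ht
    (hcard c1 hx1) (hcard c2 hx2) (hcard c3 hx3)
end

section
/- Let n ≥ 6 and let V1 ∪ V2 ∪ V3 = [n] be any partition. Then ‖C[V1,V2,V3]‖₂ ≤ ‖C_n‖₂, where C_n denotes C[W1,W2,W3] for a balanced partition W1 ∪ W2 ∪ W3 = [n] (all part sizes differ by at most 1). -/
open Finset

-- Twice `‖C[V1,V2,V3]‖₂` in terms of the part sizes; doubling clears the binomials `C(a, 2)`.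
def normPoly (a b c : ℤ) : ℤ :=
  a * (a - 1) * b ^ 2 + b * (b - 1) * c ^ 2 + c * (c - 1) * a ^ 2 +
    2 * a * b * (a + c - 1) ^ 2 + 2 * b * c * (b + a - 1) ^ 2 + 2 * c * a * (c + b - 1) ^ 2

lemma two_mul_choose_two (n : ℕ) : 2 * (n.choose 2 : ℤ) = n * (n - 1) := by
  qify
  rw [Nat.cast_choose_two]
  ring

section Tripartition

variable {α : Type*} [DecidableEq α]

def partType (V1 V2 V3 e : Finset α) : ℕ × ℕ × ℕ := (#(e ∩ V1), #(e ∩ V2), #(e ∩ V3))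

lemma partType_insert {V1 V2 V3 e : Finset α} {z : α} (hz : z ∉ e) :
    partType V1 V2 V3 (insert z e) = partType V1 V2 V3 e + partType V1 V2 V3 {z} := by
  have hd (V : Finset α) : Disjoint (e ∩ V) ({z} ∩ V) :=
    (disjoint_singleton_right.2 hz).mono inter_subset_left inter_subset_left
  simp only [partType, insert_eq, union_inter_distrib_right, Prod.mk_add_mk,
    card_union_of_disjoint (hd _).symm, add_comm]

variable [Fintype α]

structure IsTripartition (V1 V2 V3 : Finset α) : Prop where
  disjoint12 : Disjoint V1 V2
  disjoint13 : Disjoint V1 V3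
  disjoint23 : Disjoint V2 V3
  union_eq_univ : V1 ∪ V2 ∪ V3 = univ

lemma card_filter_superset_eq {H : Finset (Finset α)} {e : Finset α}
    (hH : ∀ E ∈ H, #E = #e + 1) :
    #{E ∈ H | e ⊆ E} = #{z ∈ univ \ e | insert z e ∈ H} := by
  symm
  refine card_nbij (fun z => insert z e) ?_ ?_ ?_
  · intro z hz
    simp only [coe_filter, mem_sdiff, mem_univ, true_and, Set.mem_ofPred_eq] at hz ⊢
    exact ⟨hz.2, subset_insert z e⟩
  · intro z hz w _ h
    simp only [coe_filter, mem_sdiff, mem_univ, true_and, Set.mem_ofPred_eq] at hz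
    exact (insert_inj hz.1).1 h
  · intro E hE
    simp only [coe_filter, Set.mem_ofPred_eq] at hE
    obtain ⟨z, hz, rfl⟩ := exists_eq_insert_iff.2 ⟨hE.2, (hH E hE.1).symm⟩
    exact ⟨z, by simp [hz, hE.1], rfl⟩

def typeGraph (V1 V2 V3 : Finset α) (P : ℕ × ℕ × ℕ → Prop) [DecidablePred P] (k : ℕ) :
    Finset (Finset α) :=
  {E ∈ powersetCard k univ | P (partType V1 V2 V3 E)}

lemma cycEdges_eq_typeGraph (V1 V2 V3 : Finset α) :
    cycEdges V1 V2 V3 = typeGraph V1 V2 V3 (· ∈ [(1, 1, 1), (2, 1, 0), (0, 2, 1), (1, 0, 2)]) 3 :=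
  rfl

-- A set of type `t` misses `n1 - t.1` vertices of `V1`, and adding one raises its type by
-- `(1, 0, 0)`; likewise for `V2` and `V3`.
def typeCodegree (P : ℕ × ℕ × ℕ → Prop) [DecidablePred P] (n1 n2 n3 : ℕ) (t : ℕ × ℕ × ℕ) : ℤ :=
  (if P (t + (1, 0, 0)) then (n1 - t.1 : ℤ) else 0) +
  (if P (t + (0, 1, 0)) then (n2 - t.2.1 : ℤ) else 0) +
  (if P (t + (0, 0, 1)) then (n3 - t.2.2 : ℤ) else 0)

lemma card_filter_sdiff_insert_mem_typeGraph {V1 V2 V3 : Finset α} (P : ℕ × ℕ × ℕ → Prop)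
    [DecidablePred P] {e V : Finset α} {u : ℕ × ℕ × ℕ}
    (hu : ∀ z ∈ V, partType V1 V2 V3 {z} = u) :
    (#{z ∈ V \ e | insert z e ∈ typeGraph V1 V2 V3 P (#e + 1)} : ℤ) =
      if P (partType V1 V2 V3 e + u) then (#V - #(e ∩ V) : ℤ) else 0 := by
  have hmem : ∀ z ∈ V \ e, insert z e ∈ typeGraph V1 V2 V3 P (#e + 1) ↔
      P (partType V1 V2 V3 e + u) := by
    intro z hz
    rw [mem_sdiff] at hz
    simp [typeGraph, card_insert_of_notMem hz.2, partType_insert hz.2, hu z hz.1]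
  rw [filter_congr hmem, filter_const, apply_ite card, card_empty, card_sdiff,
    Nat.cast_ite, Nat.cast_sub (card_le_card inter_subset_right), Nat.cast_zero]

def pairTypes : Finset (ℕ × ℕ × ℕ) :=
  {(2, 0, 0), (0, 2, 0), (0, 0, 2), (1, 1, 0), (0, 1, 1), (1, 0, 1)}

namespace IsTripartition

variable {V1 V2 V3 : Finset α}

lemma card_inter_add_card_inter_add_card_inter (hV : IsTripartition V1 V2 V3) (e : Finset α) :
    #(e ∩ V1) + #(e ∩ V2) + #(e ∩ V3) = #e := by
  rw [← card_union_of_disjoint (hV.disjoint12.mono inter_subset_right inter_subset_right),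
    ← card_union_of_disjoint (disjoint_union_left.2
      ⟨hV.disjoint13.mono inter_subset_right inter_subset_right,
        hV.disjoint23.mono inter_subset_right inter_subset_right⟩),
    ← inter_union_distrib_left, ← inter_union_distrib_left, hV.union_eq_univ, inter_univ]

lemma card_add_card_add_card (hV : IsTripartition V1 V2 V3) :
    #V1 + #V2 + #V3 = Fintype.card α := by
  simpa using hV.card_inter_add_card_inter_add_card_inter univ

lemma union_inter_eq (hV : IsTripartition V1 V2 V3) {s1 s2 s3 : Finset α}
    (h1 : s1 ⊆ V1) (h2 : s2 ⊆ V2) (h3 : s3 ⊆ V3) :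
    (s1 ∪ s2 ∪ s3) ∩ V1 = s1 ∧ (s1 ∪ s2 ∪ s3) ∩ V2 = s2 ∧ (s1 ∪ s2 ∪ s3) ∩ V3 = s3 := by
  have h (s V W : Finset α) (hs : s ⊆ V) (hVW : Disjoint V W) : s ∩ W = ∅ :=
    disjoint_iff_inter_eq_empty.1 (hVW.mono_left hs)
  simp only [union_inter_distrib_right, inter_eq_left.2 h1, inter_eq_left.2 h2,
    inter_eq_left.2 h3, h s1 V1 V2 h1 hV.disjoint12, h s1 V1 V3 h1 hV.disjoint13,
    h s2 V2 V1 h2 hV.disjoint12.symm, h s2 V2 V3 h2 hV.disjoint23,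
    h s3 V3 V1 h3 hV.disjoint13.symm, h s3 V3 V2 h3 hV.disjoint23.symm,
    union_empty, empty_union, and_self]

lemma partType_singleton_of_mem_left (hV : IsTripartition V1 V2 V3) {z : α} (hz : z ∈ V1) :
    partType V1 V2 V3 {z} = (1, 0, 0) := by
  obtain ⟨h1, h2, h3⟩ :=
    hV.union_inter_eq (singleton_subset_iff.2 hz) (empty_subset V2) (empty_subset V3)
  simp_all [partType]

lemma partType_singleton_of_mem_mid (hV : IsTripartition V1 V2 V3) {z : α} (hz : z ∈ V2) :
    partType V1 V2 V3 {z} = (0, 1, 0) := by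
  obtain ⟨h1, h2, h3⟩ :=
    hV.union_inter_eq (empty_subset V1) (singleton_subset_iff.2 hz) (empty_subset V3)
  simp_all [partType]

lemma partType_singleton_of_mem_right (hV : IsTripartition V1 V2 V3) {z : α} (hz : z ∈ V3) :
    partType V1 V2 V3 {z} = (0, 0, 1) := by
  obtain ⟨h1, h2, h3⟩ :=
    hV.union_inter_eq (empty_subset V1) (empty_subset V2) (singleton_subset_iff.2 hz)
  simp_all [partType]

lemma partType_mem_pairTypes (hV : IsTripartition V1 V2 V3) {e : Finset α} (he : #e = 2) :
    partType V1 V2 V3 e ∈ pairTypes := by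
  have := hV.card_inter_add_card_inter_add_card_inter e
  simp only [pairTypes, partType, mem_insert, mem_singleton, Prod.mk.injEq]
  omega

lemma card_filter_partType_eq (hV : IsTripartition V1 V2 V3) (i j k : ℕ) :
    #{e ∈ powersetCard (i + j + k) univ | partType V1 V2 V3 e = (i, j, k)} =
      (#V1).choose i * (#V2).choose j * (#V3).choose k := by
  rw [← card_powersetCard i V1, ← card_powersetCard j V2, ← card_powersetCard k V3,
    ← card_product, ← card_product]
  refine card_nbij' (fun e => ((e ∩ V1, e ∩ V2), e ∩ V3)) (fun s => s.1.1 ∪ s.1.2 ∪ s.2)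
    ?_ ?_ ?_ ?_
  · intro e he
    simp only [coe_filter, mem_powersetCard, Set.mem_ofPred_eq, partType, Prod.mk.injEq] at he
    simp [he.2]
  · rintro ⟨⟨s1, s2⟩, s3⟩ hs
    simp only [coe_product, Set.mem_prod, mem_coe, mem_powersetCard] at hs
    obtain ⟨⟨⟨h1, rfl⟩, ⟨h2, rfl⟩⟩, ⟨h3, rfl⟩⟩ := hs
    have hcard := hV.card_inter_add_card_inter_add_card_inter (s1 ∪ s2 ∪ s3)
    obtain ⟨e1, e2, e3⟩ := hV.union_inter_eq h1 h2 h3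
    rw [e1, e2, e3] at hcard
    simp only [coe_filter, mem_powersetCard, subset_univ, true_and, Set.mem_ofPred_eq, partType,
      e1, e2, e3, hcard]
  · intro e _
    simp only [← inter_union_distrib_left, hV.union_eq_univ, inter_univ]
  · rintro ⟨⟨s1, s2⟩, s3⟩ hs
    simp only [coe_product, Set.mem_prod, mem_coe, mem_powersetCard] at hs
    obtain ⟨e1, e2, e3⟩ := hV.union_inter_eq hs.1.1.1 hs.1.2.1 hs.2.1
    simp only [e1, e2, e3]

lemma card_filter_superset_eq_typeCodegree (hV : IsTripartition V1 V2 V3)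
    (P : ℕ × ℕ × ℕ → Prop) [DecidablePred P] (e : Finset α) :
    (#{E ∈ typeGraph V1 V2 V3 P (#e + 1) | e ⊆ E} : ℤ) =
      typeCodegree P #V1 #V2 #V3 (partType V1 V2 V3 e) := by
  have hsdiff : univ \ e = V1 \ e ∪ V2 \ e ∪ V3 \ e := by
    rw [← union_sdiff_distrib, ← union_sdiff_distrib, hV.union_eq_univ]
  have hd {V W : Finset α} (h : Disjoint V W) (p : α → Prop) [DecidablePred p] :
      Disjoint {z ∈ V \ e | p z} {z ∈ W \ e | p z} :=
    disjoint_filter_filter (h.mono sdiff_subset sdiff_subset)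
  rw [card_filter_superset_eq (H := typeGraph V1 V2 V3 P (#e + 1))
      (fun E hE => (mem_powersetCard.1 (mem_filter.1 hE).1).2), hsdiff,
    filter_union, filter_union, card_union_of_disjoint
      (disjoint_union_left.2 ⟨hd hV.disjoint13 _, hd hV.disjoint23 _⟩),
    card_union_of_disjoint (hd hV.disjoint12 _)]
  push_cast
  rw [card_filter_sdiff_insert_mem_typeGraph P (fun _ => hV.partType_singleton_of_mem_left),
    card_filter_sdiff_insert_mem_typeGraph P (fun _ => hV.partType_singleton_of_mem_mid),
    card_filter_sdiff_insert_mem_typeGraph P (fun _ => hV.partType_singleton_of_mem_right)]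
  rfl

lemma normTwo_typeGraph (hV : IsTripartition V1 V2 V3) (P : ℕ × ℕ × ℕ → Prop)
    [DecidablePred P] :
    (normTwo (typeGraph V1 V2 V3 P 3) : ℤ) = ∑ t ∈ pairTypes,
      ((#V1).choose t.1 * (#V2).choose t.2.1 * (#V3).choose t.2.2 : ℤ) *
        typeCodegree P #V1 #V2 #V3 t ^ 2 := by
  unfold normTwo
  push_cast
  rw [← sum_fiberwise_of_maps_to (g := partType V1 V2 V3) (t := pairTypes)
    (fun e he => hV.partType_mem_pairTypes (mem_powersetCard.1 he).2)]
  refine sum_congr rfl fun ⟨i, j, k⟩ ht => ?_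
  have hijk : i + j + k = 2 := by
    simp only [pairTypes, mem_insert, mem_singleton, Prod.mk.injEq] at ht
    omega
  have hcodeg : ∀ e ∈ {e ∈ powersetCard 2 (univ : Finset α) | partType V1 V2 V3 e = (i, j, k)},
      (#{E ∈ typeGraph V1 V2 V3 P 3 | e ⊆ E} : ℤ) ^ 2 =
        typeCodegree P #V1 #V2 #V3 (i, j, k) ^ 2 := by
    intro e he
    rw [mem_filter, mem_powersetCard] at he
    rw [← he.2, ← hV.card_filter_superset_eq_typeCodegree P e, he.1.2]
  rw [sum_congr rfl hcodeg, sum_const, ← hijk, hV.card_filter_partType_eq, nsmul_eq_mul]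
  push_cast
  rfl

lemma two_mul_normTwo_cycEdges (hV : IsTripartition V1 V2 V3) :
    2 * (normTwo (cycEdges V1 V2 V3) : ℤ) = normPoly #V1 #V2 #V3 := by
  rw [cycEdges_eq_typeGraph, hV.normTwo_typeGraph]
  simp only [pairTypes, typeCodegree, List.mem_cons, List.not_mem_nil, or_false, mem_insert,
    Prod.mk.injEq, OfNat.ofNat_ne_zero, OfNat.zero_ne_ofNat, and_true, and_self, and_false,
    OfNat.ofNat_ne_one, zero_ne_one, mem_singleton, or_self, not_false_eq_true, sum_insert,
    Nat.choose_zero_right, Nat.cast_one, mul_one, Prod.mk_add_mk, Nat.reduceAdd, add_zero,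
    Nat.succ_ne_self, ↓reduceIte, zero_add, OfNat.one_ne_ofNat, one_ne_zero, or_true,
    CharP.cast_eq_zero, sub_zero, one_mul, Nat.choose_one_right, sum_singleton, normPoly]
  linear_combination (#V2 : ℤ) ^ 2 * two_mul_choose_two (#V1) +
    (#V3 : ℤ) ^ 2 * two_mul_choose_two (#V2) + (#V1 : ℤ) ^ 2 * two_mul_choose_two (#V3)

end IsTripartition

end Tripartition

lemma normPoly_rotate (a b c : ℤ) : normPoly a b c = normPoly b c a := by
  unfold normPoly; ring

-- Integrality is used through the split `y = 0 ∨ 1 ≤ y`: the difference is negative at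
-- `c = 0`, `y = 1 / 2`.
lemma normPoly_le_transfer_first_third {a b c : ℤ} (hc : 0 ≤ c) (hcb : c ≤ b) (hba : b ≤ a)
    (hca : c + 2 ≤ a) : normPoly a b c ≤ normPoly (a - 1) b (c + 1) := by
  obtain ⟨y, hy, rfl⟩ : ∃ y, 0 ≤ y ∧ b = c + y := ⟨b - c, by omega, by ring⟩
  obtain ⟨z, hz, rfl⟩ : ∃ z, 0 ≤ z ∧ a = c + y + z := ⟨a - c - y, by omega, by ring⟩
  set Q := 12 * c * (y + z - 1) + 16 * y ^ 2 + 12 * y * z - 22 * y + 2 * z ^ 2 - 8 * z + 6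
  have hdiff : normPoly (c + y + z - 1) (c + y) (c + 1) - normPoly (c + y + z) (c + y) c =
      c * Q + y * (y - 1) * (6 * y + 4 * z - 5) := by
    unfold normPoly; ring
  have hcQ : 0 ≤ c * Q := by
    rcases hc.eq_or_lt with rfl | hc
    · simp
    · have : 0 ≤ Q := by rcases hy.eq_or_lt with rfl | hy <;> nlinarith
      positivity
  have hy_term : 0 ≤ y * (y - 1) * (6 * y + 4 * z - 5) := by
    rcases hy.eq_or_lt with rfl | hy
    · simp
    · have : 0 ≤ y - 1 := by omega
      have : 0 ≤ 6 * y + 4 * z - 5 := by omega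
      positivity
  linarith

lemma normPoly_le_transfer_first_second {a b c : ℤ} (hb : 0 ≤ b) (hbc : b ≤ c) (hca : c ≤ a)
    (hba : b + 2 ≤ a) : normPoly a b c ≤ normPoly (a - 1) (b + 1) c := by
  obtain ⟨y, hy, rfl⟩ : ∃ y, 0 ≤ y ∧ c = b + y := ⟨c - b, by omega, by ring⟩
  obtain ⟨z, hz, rfl⟩ : ∃ z, 0 ≤ z ∧ a = b + y + z := ⟨a - b - y, by omega, by ring⟩
  set Q := 12 * b * (y + z - 1) + 22 * y ^ 2 + 36 * y * z - 40 * y + 8 * z ^ 2 - 26 * z + 18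
  set R := 10 * y ^ 3 + 22 * y ^ 2 * z - 26 * y ^ 2 + 12 * y * z ^ 2 - 34 * y * z + 22 * y +
    2 * z ^ 3 - 9 * z ^ 2 + 13 * z - 6
  have hdiff : normPoly (b + y + z - 1) (b + 1) (b + y) - normPoly (b + y + z) b (b + y) =
      b * Q + R := by
    unfold normPoly; ring
  have hbQ : 0 ≤ b * Q := by
    rcases hb.eq_or_lt with rfl | hb
    · simp
    · have : 0 ≤ Q := by rcases hy.eq_or_lt with rfl | hy <;> nlinarith
      positivity
  have hR : 0 ≤ R := by
    rcases hy.eq_or_lt with rfl | hy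
    · have : 0 ≤ z - 1 := by omega
      have : 0 ≤ z - 2 := by omega
      have : 0 ≤ 2 * z - 3 := by omega
      calc (0 : ℤ) ≤ (z - 1) * (z - 2) * (2 * z - 3) := by positivity
        _ = R := by ring
    · obtain ⟨p, hp, rfl⟩ : ∃ p, 0 ≤ p ∧ y = p + 1 := ⟨y - 1, by omega, by ring⟩
      calc (0 : ℤ) ≤ 10 * p ^ 3 + 22 * p ^ 2 * z + 4 * p ^ 2 + 12 * p * z ^ 2 + 10 * p * z +
            2 * z ^ 3 + 3 * z ^ 2 + z := by positivity
        _ = R := by ring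
  linarith

def IsBalanced (a b c : ℤ) : Prop := |a - b| ≤ 1 ∧ |a - c| ≤ 1 ∧ |b - c| ≤ 1

lemma normPoly_eq_of_isBalanced {a b c a' b' c' : ℤ} (h : IsBalanced a b c)
    (h' : IsBalanced a' b' c') (hsum : a + b + c = a' + b' + c') :
    normPoly a b c = normPoly a' b' c' := by
  simp only [IsBalanced, abs_le] at h h'
  have : (a = a' ∧ b = b' ∧ c = c') ∨ (a = b' ∧ b = c' ∧ c = a') ∨ (a = c' ∧ b = a' ∧ c = b') := by
    omega
  rcases this with ⟨rfl, rfl, rfl⟩ | ⟨rfl, rfl, rfl⟩ | ⟨rfl, rfl, rfl⟩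
  · rfl
  · exact (normPoly_rotate _ _ _).symm
  · exact normPoly_rotate _ _ _

def IsSmoothing (a b c a' b' c' : ℤ) : Prop :=
  0 ≤ a' ∧ 0 ≤ b' ∧ 0 ≤ c' ∧ a' + b' + c' = a + b + c ∧
    a' ^ 2 + b' ^ 2 + c' ^ 2 < a ^ 2 + b ^ 2 + c ^ 2 ∧ normPoly a b c ≤ normPoly a' b' c'

lemma IsSmoothing.rotate {a b c a' b' c' : ℤ} (h : IsSmoothing b c a b' c' a') :
    IsSmoothing a b c a' b' c' := by
  obtain ⟨hb', hc', ha', hsum, hlt, hle⟩ := h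
  refine ⟨ha', hb', hc', by linarith, by linarith, ?_⟩
  rwa [normPoly_rotate a, normPoly_rotate a']

lemma exists_smoothing_of_max {a b c : ℤ} (hb : 0 ≤ b) (hc : 0 ≤ c) (hba : b ≤ a) (hca : c ≤ a)
    (h : ¬ IsBalanced a b c) : ∃ a' b' c', IsSmoothing a b c a' b' c' := by
  simp only [IsBalanced, abs_le, not_and_or, not_le] at h
  rcases le_total c b with hcb | hbc
  · have hca : c + 2 ≤ a := by omega
    refine ⟨a - 1, b, c + 1, by omega, hb, by omega, by ring, by nlinarith, ?_⟩
    exact normPoly_le_transfer_first_third hc hcb hba hca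
  · have hba : b + 2 ≤ a := by omega
    refine ⟨a - 1, b + 1, c, by omega, by omega, hc, by ring, by nlinarith, ?_⟩
    exact normPoly_le_transfer_first_second hb hbc hca hba

lemma exists_smoothing {a b c : ℤ} (ha : 0 ≤ a) (hb : 0 ≤ b) (hc : 0 ≤ c)
    (h : ¬ IsBalanced a b c) : ∃ a' b' c', IsSmoothing a b c a' b' c' := by
  have hrot {a b c : ℤ} : IsBalanced a b c ↔ IsBalanced b c a := by
    simp only [IsBalanced, abs_le]; omega
  rcases (by omega : (b ≤ a ∧ c ≤ a) ∨ (c ≤ b ∧ a ≤ b) ∨ (a ≤ c ∧ b ≤ c)) with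
    ⟨hba, hca⟩ | ⟨hcb, hab⟩ | ⟨hac, hbc⟩
  · exact exists_smoothing_of_max hb hc hba hca h
  · obtain ⟨b', c', a', hs⟩ := exists_smoothing_of_max hc ha hcb hab (hrot.not.1 h)
    exact ⟨a', b', c', hs.rotate⟩
  · obtain ⟨c', a', b', hs⟩ := exists_smoothing_of_max ha hb hac hbc (hrot.not.1 (hrot.not.1 h))
    exact ⟨a', b', c', hs.rotate.rotate⟩

lemma normPoly_le_of_isBalanced {a b c a' b' c' : ℤ} (ha : 0 ≤ a) (hb : 0 ≤ b) (hc : 0 ≤ c)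
    (h' : IsBalanced a' b' c') (hsum : a + b + c = a' + b' + c') :
    normPoly a b c ≤ normPoly a' b' c' := by
  induction hN : (a ^ 2 + b ^ 2 + c ^ 2).toNat using Nat.strong_induction_on
      generalizing a b c with
  | _ N ih =>
    by_cases h : IsBalanced a b c
    · exact (normPoly_eq_of_isBalanced h h' hsum).le
    · obtain ⟨a₁, b₁, c₁, ha₁, hb₁, hc₁, hsum₁, hlt, hle⟩ := exists_smoothing ha hb hc h
      have : 0 ≤ a₁ ^ 2 + b₁ ^ 2 + c₁ ^ 2 := by positivity
      exact hle.trans (ih _ (by omega) ha₁ hb₁ hc₁ (hsum₁.trans hsum) rfl)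

theorem stmt_7_general (n : ℕ)
    (V1 V2 V3 : Finset (Fin n))
    (hV12 : Disjoint V1 V2) (hV13 : Disjoint V1 V3) (hV23 : Disjoint V2 V3)
    (hVcover : V1 ∪ V2 ∪ V3 = Finset.univ)
    (W1 W2 W3 : Finset (Fin n))
    (hW12 : Disjoint W1 W2) (hW13 : Disjoint W1 W3) (hW23 : Disjoint W2 W3)
    (hWcover : W1 ∪ W2 ∪ W3 = Finset.univ)
    (hb12 : |(W1.card : ℤ) - W2.card| ≤ 1)
    (hb13 : |(W1.card : ℤ) - W3.card| ≤ 1)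
    (hb23 : |(W2.card : ℤ) - W3.card| ≤ 1) :
    normTwo (cycEdges V1 V2 V3) ≤ normTwo (cycEdges W1 W2 W3) := by
  have hV : IsTripartition V1 V2 V3 := ⟨hV12, hV13, hV23, hVcover⟩
  have hW : IsTripartition W1 W2 W3 := ⟨hW12, hW13, hW23, hWcover⟩
  have hsum : (#V1 + #V2 + #V3 : ℤ) = #W1 + #W2 + #W3 := by
    exact_mod_cast hV.card_add_card_add_card.trans hW.card_add_card_add_card.symm
  have hle : normPoly #V1 #V2 #V3 ≤ normPoly #W1 #W2 #W3 :=
    normPoly_le_of_isBalanced (by positivity) (by positivity) (by positivity) ⟨hb12, hb13, hb23⟩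
      hsum
  have : (normTwo (cycEdges V1 V2 V3) : ℤ) ≤ normTwo (cycEdges W1 W2 W3) := by
    linarith [hV.two_mul_normTwo_cycEdges, hW.two_mul_normTwo_cycEdges]
  exact_mod_cast this

theorem stmt_7 (n : ℕ) (hn : 6 ≤ n)
    (V1 V2 V3 : Finset (Fin n))
    (hV12 : Disjoint V1 V2) (hV13 : Disjoint V1 V3) (hV23 : Disjoint V2 V3)
    (hVcover : V1 ∪ V2 ∪ V3 = Finset.univ)
    (W1 W2 W3 : Finset (Fin n))
    (hW12 : Disjoint W1 W2) (hW13 : Disjoint W1 W3) (hW23 : Disjoint W2 W3)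
    (hWcover : W1 ∪ W2 ∪ W3 = Finset.univ)
    (hb12 : |(W1.card : ℤ) - W2.card| ≤ 1)
    (hb13 : |(W1.card : ℤ) - W3.card| ≤ 1)
    (hb23 : |(W2.card : ℤ) - W3.card| ≤ 1) :
    normTwo (cycEdges V1 V2 V3) ≤ normTwo (cycEdges W1 W2 W3) :=
  stmt_7_general n V1 V2 V3 hV12 hV13 hV23 hVcover W1 W2 W3 hW12 hW13 hW23 hWcover hb12 hb13 hb23
end

section
/- For all integers n₁, n₂, n₃ ≥ 0 with n₁ ≥ n₂ ≥ n₃, n₁ ≥ n₃ + 2, n₃ ≥ 1, and n₁ + n₂ + n₃ ≥ 6, passing from part sizes (n₁, n₂, n₃) to (n₁ − 1, n₂, n₃ + 1) strictly increases the ℓ2-norm of the cyclic construction: ‖C[V1',V2',V3']‖₂ > ‖C[V1,V2,V3]‖₂, where |V1'| = n₁ − 1, |V2'| = n₂, |V3'| = n₃ + 1 and |V_i| = n_i. Explicitly, the difference equals n₁²n₃ + 2n₁(n₂² + n₃² − n₂ − n₃) + n₂³ − n₃³ − 2n₂²n₃ − 3n₂n₃² − (7/2)n₂² − (1/2)n₃²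 + 2n₂n₃ + (5/2)n₂ + (1/2)n₃. -/
/-!
The codegree of a pair in `C[V1,V2,V3]` depends only on how the pair meets the parts: a pair
inside `V1` lies in `|V2|` edges, a pair in `V1 × V2` lies in `|V1| + |V3| - 1` edges, and the
rotation `V1 → V2 → V3 → V1` preserves the construction, which gives the other four pair types.
Summing the squares yields a closed polynomial `cycNorm` in the part sizes, so the gain from
moving one vertex of `V1` to `V3` is a cubic polynomial, positive on the stated range by an
explicit sum-of-squares decomposition.
-/

open Finset

namespace CyclicConstruction

variable {α : Type*} [DecidableEq α]

def codegree (H : Finset (Finset α)) (p : Finset α) : ℕ := #{E ∈ H | p ⊆ E}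

theorem codegree_eq_card_sdiff {H : Finset (Finset α)} {p : Finset α}
    (hH : ∀ E ∈ H, #E = #p + 1) (W : Finset α) (hW : ∀ v ∉ p, insert v p ∈ H ↔ v ∈ W) :
    codegree H p = #(W \ p) := by
  have himage : {E ∈ H | p ⊆ E} = (W \ p).image (insert · p) := by
    ext E
    simp only [mem_filter, mem_image, mem_sdiff]
    constructor
    · rintro ⟨hE, hpE⟩
      obtain ⟨v, hv, rfl⟩ := exists_eq_insert_iff.2 ⟨hpE, (hH E hE).symm⟩
      exact ⟨v, ⟨(hW v hv).1 hE, hv⟩, rfl⟩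
    · rintro ⟨v, ⟨hvW, hv⟩, rfl⟩
      exact ⟨(hW v hv).2 hvW, subset_insert v p⟩
  rw [codegree, himage, card_image_of_injOn]
  intro v hv w _ hvw
  exact (insert_inj (mem_sdiff.1 hv).2).1 hvw

theorem card_insert_inter {p V : Finset α} {v : α} (hv : v ∉ p) :
    #(insert v p ∩ V) = #(p ∩ V) + if v ∈ V then 1 else 0 := by
  split_ifs with hvV
  · rw [insert_inter_of_mem hvV, card_insert_of_notMem fun h => hv (mem_of_mem_inter_left h)]
  · rw [insert_inter_of_notMem hvV, add_zero]

theorem card_inter_union_of_disjoint {V1 V2 V3 : Finset α} (h12 : Disjoint V1 V2)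
    (h13 : Disjoint V1 V3) (h23 : Disjoint V2 V3) (s : Finset α) :
    #(s ∩ (V1 ∪ V2 ∪ V3)) = #(s ∩ V1) + #(s ∩ V2) + #(s ∩ V3) := by
  rw [inter_union_distrib_left, inter_union_distrib_left, card_union_of_disjoint,
    card_union_of_disjoint]
  · exact h12.mono inter_subset_right inter_subset_right
  · exact disjoint_union_left.2 ⟨h13.mono inter_subset_right inter_subset_right,
      h23.mono inter_subset_right inter_subset_right⟩

def partCounts (V1 V2 V3 s : Finset α) : ℕ × ℕ × ℕ := (#(s ∩ V1), #(s ∩ V2), #(s ∩ V3))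

theorem filter_partCounts_rotate {V1 V2 V3 : Finset α} (s : Finset (Finset α)) (a b c : ℕ) :
    {p ∈ s | partCounts V1 V2 V3 p = (a, b, c)} = {p ∈ s | partCounts V2 V3 V1 p = (b, c, a)} :=
  filter_congr fun p _ => by simp only [partCounts, Prod.mk.injEq]; tauto

theorem injOn_pair (h12 : Disjoint V1 V2) :
    Set.InjOn (fun q : α × α => ({q.1, q.2} : Finset α)) (V1 ×ˢ V2 : Finset (α × α)) := by
  rintro ⟨x, y⟩ hxy ⟨x', y'⟩ hxy' h
  simp only [coe_product, Set.mem_prod, mem_coe] at hxy hxy'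
  have h' : ({x, y} : Set α) = {x', y'} := by simpa using congrArg ((↑) : Finset α → Set α) h
  rcases Set.pair_eq_pair_iff.1 h' with ⟨rfl, rfl⟩ | ⟨rfl, -⟩
  · rfl
  · exact (disjoint_left.1 h12 hxy.1 hxy'.2).elim

variable [Fintype α] {V1 V2 V3 : Finset α}

theorem mem_cycEdges {E : Finset α} :
    E ∈ cycEdges V1 V2 V3 ↔
      #E = 3 ∧ partCounts V1 V2 V3 E ∈ [(1, 1, 1), (2, 1, 0), (0, 2, 1), (1, 0, 2)] := by
  simp [cycEdges, partCounts]

theorem cycEdges_rotate (V1 V2 V3 : Finset α) : cycEdges V1 V2 V3 = cycEdges V2 V3 V1 := by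
  ext E
  refine mem_cycEdges.trans (mem_cycEdges.trans (and_congr_right fun _ => ?_)).symm
  simp only [partCounts, List.mem_cons, List.not_mem_nil, or_false, Prod.mk.injEq]
  omega

theorem insert_mem_cycEdges_iff {p : Finset α} {v : α} (hp : #p = 2) (hv : v ∉ p) :
    insert v p ∈ cycEdges V1 V2 V3 ↔
      (#(p ∩ V1) + (if v ∈ V1 then 1 else 0), #(p ∩ V2) + (if v ∈ V2 then 1 else 0),
        #(p ∩ V3) + (if v ∈ V3 then 1 else 0)) ∈ [(1, 1, 1), (2, 1, 0), (0, 2, 1), (1, 0, 2)] := by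
  rw [mem_cycEdges, card_insert_of_notMem hv, hp]
  simp only [partCounts, card_insert_inter hv, true_and]

theorem subset_union_of_mem_cycEdges (h12 : Disjoint V1 V2) (h13 : Disjoint V1 V3)
    (h23 : Disjoint V2 V3) {E : Finset α} (hE : E ∈ cycEdges V1 V2 V3) : E ⊆ V1 ∪ V2 ∪ V3 := by
  obtain ⟨hE3, hτ⟩ := mem_cycEdges.1 hE
  have hcard : #(E ∩ (V1 ∪ V2 ∪ V3)) = #E := by
    simp only [partCounts, List.mem_cons, List.not_mem_nil, or_false, Prod.mk.injEq] at hτ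
    rw [card_inter_union_of_disjoint h12 h13 h23]
    omega
  exact inter_eq_left.1 (eq_of_subset_of_card_le inter_subset_left hcard.ge)

def pairTypes : Finset (ℕ × ℕ × ℕ) :=
  {(2, 0, 0), (0, 2, 0), (0, 0, 2), (1, 1, 0), (0, 1, 1), (1, 0, 1)}

theorem partCounts_mem_pairTypes (h12 : Disjoint V1 V2) (h13 : Disjoint V1 V3)
    (h23 : Disjoint V2 V3) {p : Finset α} (hp : #p = 2)
    (hcod : codegree (cycEdges V1 V2 V3) p ≠ 0) : partCounts V1 V2 V3 p ∈ pairTypes := by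
  obtain ⟨E, hE⟩ := card_ne_zero.1 hcod
  obtain ⟨hEmem, hpE⟩ := mem_filter.1 hE
  have hsum := card_inter_union_of_disjoint h12 h13 h23 p
  rw [inter_eq_left.2 (hpE.trans (subset_union_of_mem_cycEdges h12 h13 h23 hEmem)), hp] at hsum
  simp only [pairTypes, partCounts, mem_insert, mem_singleton, Prod.mk.injEq]
  omega

theorem codegree_cycEdges_of_partCounts_eq_200 (h12 : Disjoint V1 V2) (h13 : Disjoint V1 V3)
    (h23 : Disjoint V2 V3) {p : Finset α} (hp : #p = 2) (hτ : partCounts V1 V2 V3 p = (2, 0, 0)) :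
    codegree (cycEdges V1 V2 V3) p = #V2 := by
  simp only [partCounts, Prod.mk.injEq] at hτ
  obtain ⟨h1, h2, h3⟩ := hτ
  have hdisj : Disjoint V2 p := by
    rw [disjoint_comm, disjoint_iff_inter_eq_empty, ← card_eq_zero, h2]
  rw [codegree_eq_card_sdiff (fun E hE => by rw [(mem_cycEdges.1 hE).1, hp]) V2 fun v hv => ?_,
    sdiff_eq_self_of_disjoint hdisj]
  rw [insert_mem_cycEdges_iff hp hv, h1, h2, h3]
  rw [disjoint_left] at h12 h13 h23
  by_cases hv1 : v ∈ V1 <;> by_cases hv2 : v ∈ V2 <;> by_cases hv3 : v ∈ V3 <;> simp_all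

theorem codegree_cycEdges_of_partCounts_eq_110 (h12 : Disjoint V1 V2) (h13 : Disjoint V1 V3)
    (h23 : Disjoint V2 V3) {p : Finset α} (hp : #p = 2) (hτ : partCounts V1 V2 V3 p = (1, 1, 0)) :
    codegree (cycEdges V1 V2 V3) p = #V1 + #V3 - 1 := by
  simp only [partCounts, Prod.mk.injEq] at hτ
  obtain ⟨h1, h2, h3⟩ := hτ
  have hW : #((V1 ∪ V3) \ p) = #V1 + #V3 - 1 := by
    rw [card_sdiff, inter_union_distrib_left,
      card_union_of_disjoint (h13.mono inter_subset_right inter_subset_right),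
      card_union_of_disjoint h13, h1, h3]
  rw [codegree_eq_card_sdiff (fun E hE => by rw [(mem_cycEdges.1 hE).1, hp]) (V1 ∪ V3)
    fun v hv => ?_, hW]
  rw [insert_mem_cycEdges_iff hp hv, h1, h2, h3, mem_union]
  rw [disjoint_left] at h12 h13 h23
  by_cases hv1 : v ∈ V1 <;> by_cases hv2 : v ∈ V2 <;> by_cases hv3 : v ∈ V3 <;> simp_all

theorem filter_partCounts_eq_200 (h12 : Disjoint V1 V2) (h13 : Disjoint V1 V3) :
    {p ∈ powersetCard 2 (univ : Finset α) | partCounts V1 V2 V3 p = (2, 0, 0)} =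
      powersetCard 2 V1 := by
  ext p
  simp only [mem_filter, mem_powersetCard, subset_univ, true_and, partCounts, Prod.mk.injEq]
  constructor
  · rintro ⟨hp, h1, -, -⟩
    exact ⟨inter_eq_left.1 (eq_of_subset_of_card_le inter_subset_left (by rw [hp, h1])), hp⟩
  · rintro ⟨hsub, hp⟩
    rw [inter_eq_left.2 hsub, disjoint_iff_inter_eq_empty.1 (h12.mono_left hsub),
      disjoint_iff_inter_eq_empty.1 (h13.mono_left hsub), card_empty]
    exact ⟨hp, hp, rfl, rfl⟩

theorem filter_partCounts_eq_110 (h12 : Disjoint V1 V2) (h13 : Disjoint V1 V3)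
    (h23 : Disjoint V2 V3) :
    {p ∈ powersetCard 2 (univ : Finset α) | partCounts V1 V2 V3 p = (1, 1, 0)} =
      (V1 ×ˢ V2).image fun q => {q.1, q.2} := by
  rw [disjoint_left] at h12 h13 h23
  ext p
  simp only [mem_filter, mem_powersetCard_univ, mem_image, mem_product, Prod.exists, partCounts,
    Prod.mk.injEq]
  constructor
  · rintro ⟨hp, h1, h2, -⟩
    obtain ⟨x, hx⟩ := card_eq_one.1 h1
    obtain ⟨y, hy⟩ := card_eq_one.1 h2
    obtain ⟨hxp, hxV⟩ := mem_inter.1 (hx ▸ mem_singleton_self x)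
    obtain ⟨hyp, hyV⟩ := mem_inter.1 (hy ▸ mem_singleton_self y)
    have hxy : x ≠ y := fun h => h12 hxV (h ▸ hyV)
    refine ⟨x, y, ⟨hxV, hyV⟩, eq_of_subset_of_card_le (insert_subset hxp ?_) ?_⟩
    · exact singleton_subset_iff.2 hyp
    · rw [hp, card_pair hxy]
  · rintro ⟨x, y, ⟨hx, hy⟩, rfl⟩
    have hxy : x ≠ y := fun h => h12 hx (h ▸ hy)
    have hyV1 : y ∉ V1 := fun h => h12 h hy
    rw [card_pair hxy]
    simp [hx, hy, hyV1, h12 hx, h13 hx, h23 hy]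

theorem sum_sq_codegree_partCounts_eq_200 (h12 : Disjoint V1 V2) (h13 : Disjoint V1 V3)
    (h23 : Disjoint V2 V3) :
    ∑ p ∈ powersetCard 2 (univ : Finset α) with partCounts V1 V2 V3 p = (2, 0, 0),
      (codegree (cycEdges V1 V2 V3) p : ℚ) ^ 2 = #V1 * (#V1 - 1) / 2 * #V2 ^ 2 := by
  have hcod : ∀ p ∈ {p ∈ powersetCard 2 (univ : Finset α) | partCounts V1 V2 V3 p = (2, 0, 0)},
      (codegree (cycEdges V1 V2 V3) p : ℚ) ^ 2 = #V2 ^ 2 := fun p hp => by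
    obtain ⟨hp2, hτ⟩ := mem_filter.1 hp
    rw [codegree_cycEdges_of_partCounts_eq_200 h12 h13 h23 (mem_powersetCard_univ.1 hp2) hτ]
  rw [sum_congr rfl hcod, sum_const, filter_partCounts_eq_200 h12 h13, card_powersetCard,
    nsmul_eq_mul, Nat.cast_choose_two]

theorem sum_sq_codegree_partCounts_eq_110 (h12 : Disjoint V1 V2) (h13 : Disjoint V1 V3)
    (h23 : Disjoint V2 V3) :
    ∑ p ∈ powersetCard 2 (univ : Finset α) with partCounts V1 V2 V3 p = (1, 1, 0),
      (codegree (cycEdges V1 V2 V3) p : ℚ) ^ 2 = #V1 * #V2 * (#V1 + #V3 - 1) ^ 2 := by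
  have hcod : ∀ p ∈ {p ∈ powersetCard 2 (univ : Finset α) | partCounts V1 V2 V3 p = (1, 1, 0)},
      (codegree (cycEdges V1 V2 V3) p : ℚ) ^ 2 = (#V1 + #V3 - 1) ^ 2 := fun p hp => by
    obtain ⟨hp2, hτ⟩ := mem_filter.1 hp
    have hV1 : 1 ≤ #V1 := by
      simp only [partCounts, Prod.mk.injEq] at hτ
      exact hτ.1 ▸ card_le_card inter_subset_right
    rw [codegree_cycEdges_of_partCounts_eq_110 h12 h13 h23 (mem_powersetCard_univ.1 hp2) hτ,
      Nat.cast_sub (by omega)]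
    push_cast
    rfl
  rw [sum_congr rfl hcod, sum_const, filter_partCounts_eq_110 h12 h13 h23,
    card_image_of_injOn (injOn_pair h12), card_product, nsmul_eq_mul]
  push_cast
  rfl

theorem sum_sq_codegree_rotate (V1 V2 V3 : Finset α) (a b c : ℕ) :
    ∑ p ∈ powersetCard 2 (univ : Finset α) with partCounts V1 V2 V3 p = (a, b, c),
      (codegree (cycEdges V1 V2 V3) p : ℚ) ^ 2 =
    ∑ p ∈ powersetCard 2 (univ : Finset α) with partCounts V2 V3 V1 p = (b, c, a),
      (codegree (cycEdges V2 V3 V1) p : ℚ) ^ 2 := by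
  rw [filter_partCounts_rotate, cycEdges_rotate]

def cycNorm (a b c : ℚ) : ℚ :=
  a * (a - 1) / 2 * b ^ 2 + a * b * (a + c - 1) ^ 2 +
  b * (b - 1) / 2 * c ^ 2 + b * c * (b + a - 1) ^ 2 +
  c * (c - 1) / 2 * a ^ 2 + c * a * (c + b - 1) ^ 2

theorem normTwo_cycEdges (h12 : Disjoint V1 V2) (h13 : Disjoint V1 V3) (h23 : Disjoint V2 V3) :
    (normTwo (cycEdges V1 V2 V3) : ℚ) = cycNorm #V1 #V2 #V3 := by
  have hsplit : (normTwo (cycEdges V1 V2 V3) : ℚ) = ∑ τ ∈ pairTypes,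
      ∑ p ∈ powersetCard 2 (univ : Finset α) with partCounts V1 V2 V3 p = τ,
        (codegree (cycEdges V1 V2 V3) p : ℚ) ^ 2 := by
    rw [sum_fiberwise_eq_sum_filter, sum_filter_of_ne fun p hp hcod => ?_]
    · push_cast [normTwo, codegree]
      rfl
    · exact partCounts_mem_pairTypes h12 h13 h23 (mem_powersetCard_univ.1 hp)
        (by simpa using hcod)
  rw [hsplit, pairTypes, sum_insert (by decide), sum_insert (by decide), sum_insert (by decide),
    sum_insert (by decide), sum_insert (by decide), sum_singleton,
    sum_sq_codegree_rotate V1 V2 V3 0 2 0, sum_sq_codegree_rotate V1 V2 V3 0 0 2,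
    sum_sq_codegree_rotate V2 V3 V1 0 2 0, sum_sq_codegree_rotate V1 V2 V3 0 1 1,
    sum_sq_codegree_rotate V1 V2 V3 1 0 1, sum_sq_codegree_rotate V2 V3 V1 0 1 1,
    sum_sq_codegree_partCounts_eq_200 h12 h13 h23,
    sum_sq_codegree_partCounts_eq_200 h23 h12.symm h13.symm,
    sum_sq_codegree_partCounts_eq_200 h13.symm h23.symm h12,
    sum_sq_codegree_partCounts_eq_110 h12 h13 h23,
    sum_sq_codegree_partCounts_eq_110 h23 h12.symm h13.symm,
    sum_sq_codegree_partCounts_eq_110 h13.symm h23.symm h12, cycNorm]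
  ring

def cycNormGain (a b c : ℚ) : ℚ :=
  a ^ 2 * c + 2 * a * (b ^ 2 + c ^ 2 - b - c)
    + b ^ 3 - c ^ 3 - 2 * b ^ 2 * c - 3 * b * c ^ 2
    - 7 / 2 * b ^ 2 - 1 / 2 * c ^ 2 + 2 * b * c
    + 5 / 2 * b + 1 / 2 * c

theorem cycNorm_sub_cycNorm (a b c : ℚ) :
    cycNorm (a - 1) b (c + 1) - cycNorm a b c = cycNormGain a b c := by
  unfold cycNorm cycNormGain
  ring

/- With `x = a - c - 2`, `k = c - 1`, `t = b - c`, the gain is the sum of nonnegative terms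
`b t² + 2x (b - 1/2)² + x (11/2 + 10k + 4k²) + x² (1 + k) + k (2 (t + 1/4)² + 6k + 87/8)
  + 5/2 (t - 1/10)² + 199/40`. -/
theorem cycNormGain_pos {a b c : ℚ} (hc : 1 ≤ c) (ha : c + 2 ≤ a) (hb : 0 ≤ b) :
    0 < cycNormGain a b c := by
  have hx : 0 ≤ a - c - 2 := by linarith
  have hk : 0 ≤ c - 1 := by linarith
  unfold cycNormGain
  linarith [mul_nonneg hb (sq_nonneg (b - c)), mul_nonneg hx (sq_nonneg (b - 1 / 2)),
    mul_nonneg hk (sq_nonneg (b - c + 1 / 4)), sq_nonneg (b - c - 1 / 10),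
    mul_nonneg hx hk, mul_nonneg (mul_nonneg hx hk) hk, mul_nonneg hx hx,
    mul_nonneg (mul_nonneg hx hx) hk, mul_nonneg hk hk]

end CyclicConstruction

open CyclicConstruction in
theorem stmt_17_general {α : Type*} [Fintype α] [DecidableEq α] (n1 n2 n3 : ℕ)
    (h13 : n3 + 2 ≤ n1) (h3 : 1 ≤ n3)
    (V1' V2' V3' : Finset α)
    (h12' : Disjoint V1' V2') (h13' : Disjoint V1' V3') (h23' : Disjoint V2' V3')
    (c1' : V1'.card = n1 - 1) (c2' : V2'.card = n2) (c3' : V3'.card = n3 + 1)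
    (V1 V2 V3 : Finset α)
    (hd12 : Disjoint V1 V2) (hd13 : Disjoint V1 V3) (hd23 : Disjoint V2 V3)
    (c1 : V1.card = n1) (c2 : V2.card = n2) (c3 : V3.card = n3) :
    normTwo (cycEdges V1 V2 V3) < normTwo (cycEdges V1' V2' V3') ∧
      (normTwo (cycEdges V1' V2' V3') : ℚ) - normTwo (cycEdges V1 V2 V3) =
        (n1 : ℚ) ^ 2 * n3 + 2 * n1 * ((n2 : ℚ) ^ 2 + (n3 : ℚ) ^ 2 - n2 - n3)
          + (n2 : ℚ) ^ 3 - (n3 : ℚ) ^ 3 - 2 * (n2 : ℚ) ^ 2 * n3 - 3 * n2 * (n3 : ℚ) ^ 2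
          - 7 / 2 * (n2 : ℚ) ^ 2 - 1 / 2 * (n3 : ℚ) ^ 2 + 2 * (n2 : ℚ) * n3
          + 5 / 2 * n2 + 1 / 2 * n3 := by
  have hgain : (normTwo (cycEdges V1' V2' V3') : ℚ) - normTwo (cycEdges V1 V2 V3) =
      cycNormGain n1 n2 n3 := by
    rw [normTwo_cycEdges h12' h13' h23', normTwo_cycEdges hd12 hd13 hd23, c1', c2', c3', c1, c2,
      c3, Nat.cast_sub (by omega)]
    push_cast
    exact cycNorm_sub_cycNorm _ _ _
  have hpos : 0 < cycNormGain n1 n2 n3 :=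
    cycNormGain_pos (by exact_mod_cast h3) (by exact_mod_cast h13) (Nat.cast_nonneg n2)
  exact ⟨by exact_mod_cast sub_pos.1 (hgain ▸ hpos), hgain⟩

theorem stmt_17 {α : Type*} [Fintype α] [DecidableEq α] (n1 n2 n3 : ℕ)
    (h21 : n2 ≤ n1) (h32 : n3 ≤ n2) (h13 : n3 + 2 ≤ n1) (h3 : 1 ≤ n3)
    (hsum : 6 ≤ n1 + n2 + n3)
    (V1' V2' V3' : Finset α)
    (h12' : Disjoint V1' V2') (h13' : Disjoint V1' V3') (h23' : Disjoint V2' V3')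
    (c1' : V1'.card = n1 - 1) (c2' : V2'.card = n2) (c3' : V3'.card = n3 + 1)
    (V1 V2 V3 : Finset α)
    (hd12 : Disjoint V1 V2) (hd13 : Disjoint V1 V3) (hd23 : Disjoint V2 V3)
    (c1 : V1.card = n1) (c2 : V2.card = n2) (c3 : V3.card = n3) :
    normTwo (cycEdges V1 V2 V3) < normTwo (cycEdges V1' V2' V3') ∧
      (normTwo (cycEdges V1' V2' V3') : ℚ) - normTwo (cycEdges V1 V2 V3) =
        (n1 : ℚ) ^ 2 * n3 + 2 * n1 * ((n2 : ℚ) ^ 2 + (n3 : ℚ) ^ 2 - n2 - n3)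
          + (n2 : ℚ) ^ 3 - (n3 : ℚ) ^ 3 - 2 * (n2 : ℚ) ^ 2 * n3 - 3 * n2 * (n3 : ℚ) ^ 2
          - 7 / 2 * (n2 : ℚ) ^ 2 - 1 / 2 * (n3 : ℚ) ^ 2 + 2 * (n2 : ℚ) * n3
          + 5 / 2 * n2 + 1 / 2 * n3 :=
  stmt_17_general n1 n2 n3 h13 h3 V1' V2' V3' h12' h13' h23' c1' c2' c3' V1 V2 V3 hd12 hd13 hd23 c1
    c2 c3
end

section
/- Let H be a K₄³-free 3-graph with vertex partition V = V1 ∪ V2 ∪ V3, let M := C[V1,V2,V3] \ H be the missing edges, and suppose u₁, u₂ ∈ V1 with N = N_H(u₁u₂) ∩ V3 the set of w ∈ V3 with {u₁,u₂,w} ∈ H. Then for every pair {y,z} ⊆ N, at least one of {u₁,y,z}, {u₂,y,z} belongs to M, and consequently d_M(u₁) + d_M(u₂) ≥ C(|N|, 2), where d_M(v) is the number of triples of M containing v. -/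
/-- A 3-graph is `K₄³`-free if no 4 vertices span all four of their triples. -/
def K43Free {α : Type*} [DecidableEq α] (H : Finset (Finset α)) : Prop :=
  ¬∃ S : Finset α, S.card = 4 ∧ ∀ e ∈ Finset.powersetCard 3 S, e ∈ H

/-!
If both `{u₁,y,z}` and `{u₂,y,z}` were edges of `H`, then together with `{u₁,u₂,y}` and
`{u₁,u₂,z}` the four vertices `u₁,u₂,y,z` would span a `K₄³`. Both triples have type `V3V3V1`,
so they lie in `C[V1,V2,V3]`, and hence one of them is missing. For the count, sending a pair
`p ⊆ N` to whichever of `{u₁} ∪ p`, `{u₂} ∪ p` is missing is injective on each side, since `p`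
is recovered by deleting `uᵢ`.
-/

theorem K43Free.exists_erase_notMem {α : Type*} [DecidableEq α] {H : Finset (Finset α)}
    (hfree : K43Free H) {S : Finset α} (hS : S.card = 4) : ∃ x ∈ S, S.erase x ∉ H := by
  by_contra! h
  refine hfree ⟨S, hS, fun e he => ?_⟩
  obtain ⟨heS, he3⟩ := Finset.mem_powersetCard.mp he
  obtain ⟨x, hx⟩ : ∃ x, S \ e = {x} := by
    rw [← Finset.card_eq_one, Finset.card_sdiff_of_subset heS, hS, he3]
  have hxS : x ∈ S := (Finset.mem_sdiff.mp (hx ▸ Finset.mem_singleton_self x)).1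
  rw [← Finset.sdiff_sdiff_eq_self heS, hx, Finset.sdiff_singleton_eq_erase]
  exact h x hxS

theorem K43Free.notMem_of_mem_of_mem_of_mem {α : Type*} [DecidableEq α]
    {H : Finset (Finset α)} (hfree : K43Free H) {a b c d : α}
    (hab : a ≠ b) (hac : a ≠ c) (had : a ≠ d) (hbc : b ≠ c) (hbd : b ≠ d) (hcd : c ≠ d)
    (habc : {a, b, c} ∈ H) (habd : {a, b, d} ∈ H) (hacd : {a, c, d} ∈ H) :
    {b, c, d} ∉ H := by
  intro hbcd
  have hcard : ({a, b, c, d} : Finset α).card = 4 := by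
    simp [Finset.card_insert_of_notMem, *]
  obtain ⟨x, hx, hxH⟩ := hfree.exists_erase_notMem hcard
  simp only [Finset.mem_insert, Finset.mem_singleton] at hx
  rcases hx with rfl | rfl | rfl | rfl
  all_goals simp [Finset.erase_insert_of_ne, *] at hxH

theorem mem_cycEdges_of_mem_of_mem {α : Type*} [Fintype α] [DecidableEq α]
    {V1 V2 V3 : Finset α} (h12 : Disjoint V1 V2) (h13 : Disjoint V1 V3) (h23 : Disjoint V2 V3)
    {u y z : α} (hu : u ∈ V1) (hy : y ∈ V3) (hz : z ∈ V3) (hyz : y ≠ z) :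
    {u, y, z} ∈ cycEdges V1 V2 V3 := by
  have huy := Finset.disjoint_iff_ne.mp h13 u hu y hy
  have huz := Finset.disjoint_iff_ne.mp h13 u hu z hz
  simp [cycEdges, Finset.card_insert_of_notMem, Finset.insert_inter_of_mem,
    Finset.insert_inter_of_notMem, *, Finset.disjoint_left.mp h13 hu,
    Finset.disjoint_left.mp h12 hu, Finset.disjoint_right.mp h13 hy,
    Finset.disjoint_right.mp h13 hz, Finset.disjoint_right.mp h23 hy,
    Finset.disjoint_right.mp h23 hz]

theorem card_filter_insert_mem_le {α : Type*} [DecidableEq α] {M : Finset (Finset α)} {u : α}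
    {P : Finset (Finset α)} (hP : ∀ p ∈ P, u ∉ p) :
    (P.filter fun p => insert u p ∈ M).card ≤ (M.filter fun E => u ∈ E).card := by
  refine Finset.card_le_card_of_injOn (insert u) (fun p hp => ?_) (fun p hp q hq hpq => ?_)
  · simp only [Finset.mem_coe, Finset.mem_filter] at hp
    simp [hp.2]
  · simp only [Finset.mem_coe, Finset.mem_filter] at hp hq
    rw [← Finset.erase_insert (hP p hp.1), ← Finset.erase_insert (hP q hq.1)]
    exact congrArg (·.erase u) hpq

theorem stmt_18_general {α : Type*} [Fintype α] [DecidableEq α]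
    (H : Finset (Finset α)) (hfree : K43Free H)
    (V1 V2 V3 : Finset α)
    (h12 : Disjoint V1 V2) (h13 : Disjoint V1 V3) (h23 : Disjoint V2 V3)
    (u1 u2 : α) (hu1 : u1 ∈ V1) (hu2 : u2 ∈ V1) (hu : u1 ≠ u2) :
    -- M: missing edges; N: vertices of V3 forming an edge with the pair u1u2
    let M : Finset (Finset α) := cycEdges V1 V2 V3 \ H
    let N : Finset α := V3.filter fun w => ({u1, u2, w} : Finset α) ∈ H
    (∀ y ∈ N, ∀ z ∈ N, y ≠ z →
        ({u1, y, z} : Finset α) ∈ M ∨ ({u2, y, z} : Finset α) ∈ M) ∧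
      (M.filter fun E => u1 ∈ E).card + (M.filter fun E => u2 ∈ E).card ≥
        N.card.choose 2 := by
  intro M N
  have hne : ∀ u ∈ V1, ∀ w ∈ N, u ≠ w := fun u hu w hw =>
    Finset.disjoint_iff_ne.mp h13 u hu w (Finset.mem_filter.mp hw).1
  have missing : ∀ y ∈ N, ∀ z ∈ N, y ≠ z →
      ({u1, y, z} : Finset α) ∈ M ∨ ({u2, y, z} : Finset α) ∈ M := by
    intro y hyN z hzN hyz
    obtain ⟨hyV3, hy⟩ := Finset.mem_filter.mp hyN
    obtain ⟨hzV3, hz⟩ := Finset.mem_filter.mp hzN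
    have mem_H : ∀ u ∈ V1, {u, y, z} ∉ M → {u, y, z} ∈ H := fun u hu h => by
      simpa [M, mem_cycEdges_of_mem_of_mem h12 h13 h23 hu hyV3 hzV3 hyz] using h
    by_contra! h
    exact hfree.notMem_of_mem_of_mem_of_mem hu (hne u1 hu1 y hyN) (hne u1 hu1 z hzN)
      (hne u2 hu2 y hyN) (hne u2 hu2 z hzN) hyz hy hz (mem_H u1 hu1 h.1) (mem_H u2 hu2 h.2)
  refine ⟨missing, ?_⟩
  let A (u : α) := (N.powersetCard 2).filter fun p => insert u p ∈ M
  have hA : ∀ u ∈ V1, (A u).card ≤ (M.filter fun E => u ∈ E).card := fun u hu =>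
    card_filter_insert_mem_le fun p hp hup =>
      hne u hu u ((Finset.mem_powersetCard.mp hp).1 hup) rfl
  have hcover : N.powersetCard 2 ⊆ A u1 ∪ A u2 := by
    intro p hp
    obtain ⟨hpN, hp2⟩ := Finset.mem_powersetCard.mp hp
    obtain ⟨y, z, hyz, rfl⟩ := Finset.card_eq_two.mp hp2
    rcases missing y (hpN (by simp)) z (hpN (by simp)) hyz with h | h
    · exact Finset.mem_union_left _ (Finset.mem_filter.mpr ⟨hp, h⟩)
    · exact Finset.mem_union_right _ (Finset.mem_filter.mpr ⟨hp, h⟩)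
  calc N.card.choose 2 = (N.powersetCard 2).card := (Finset.card_powersetCard 2 N).symm
    _ ≤ (A u1 ∪ A u2).card := Finset.card_le_card hcover
    _ ≤ (A u1).card + (A u2).card := Finset.card_union_le _ _
    _ ≤ _ := add_le_add (hA u1 hu1) (hA u2 hu2)

theorem stmt_18 {α : Type*} [Fintype α] [DecidableEq α]
    (H : Finset (Finset α)) (hH : ∀ E ∈ H, E.card = 3) (hfree : K43Free H)
    (V1 V2 V3 : Finset α)
    (h12 : Disjoint V1 V2) (h13 : Disjoint V1 V3) (h23 : Disjoint V2 V3)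
    (hcover : V1 ∪ V2 ∪ V3 = Finset.univ)
    (u1 u2 : α) (hu1 : u1 ∈ V1) (hu2 : u2 ∈ V1) (hu : u1 ≠ u2) :
    -- M: missing edges; N: vertices of V3 forming an edge with the pair u1u2
    let M : Finset (Finset α) := cycEdges V1 V2 V3 \ H
    let N : Finset α := V3.filter fun w => ({u1, u2, w} : Finset α) ∈ H
    (∀ y ∈ N, ∀ z ∈ N, y ≠ z →
        ({u1, y, z} : Finset α) ∈ M ∨ ({u2, y, z} : Finset α) ∈ M) ∧
      (M.filter fun E => u1 ∈ E).card + (M.filter fun E => u2 ∈ E).card ≥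
        N.card.choose 2 :=
  stmt_18_general H hfree V1 V2 V3 h12 h13 h23 u1 u2 hu1 hu2 hu
end
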